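/- On the sphere S³ = {u ∈ ℙ²ℂ : q(u) = 0}, where q(u) = |u₀|² − |u₁|² − |u₂|², the visual distance d(u,v) = sqrt(|⟨u,v⟩|/(‖u‖‖v‖)) satisfies d(u,v)² ≤ d_E(u,v) and d_E(u,v) ≤ C·d(u,v) for some absolute constant C, where d_E(u,v) = ‖u∧v‖/(‖u‖‖v‖) and ⟨u,v⟩ = u₀\overline{v₀} − u₁\overline{v₁} − u₂\overline{v₂}. -/

import Mathlib

/-!
On a null vector `|u₁|² + |u₂|² = |u₀|²`, so `‖u‖ = √2 |u₀|`. Writing `A = u₀ v̄₀` and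
`B = u₁ v̄₁ + u₂ v̄₂`, one has `⟨u,v⟩ = A - B`, `u·v = A + B`, `‖u‖‖v‖ = 2|A|`, and `|B| ≤ |A|` by
Cauchy–Schwarz. Hence `‖u ∧ v‖² = 4|A|² - |A + B|²`, which the parallelogram law bounds below by
`|A - B|²` and the triangle inequality bounds above by `4|A||A - B|`. This gives
`d² ≤ d_E ≤ √2 d`.
-/

open scoped ComplexConjugate

/-- Standard Hermitian inner product on ℂ³. -/
noncomputable def cdot (u v : Fin 3 → ℂ) : ℂ := ∑ i, u i * conj (v i)

/-- Hermitian norm on ℂ³. -/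
noncomputable def hnorm (u : Fin 3 → ℂ) : ℝ := Real.sqrt (cdot u u).re

/-- Squared norm of `u ∧ v` in Λ²ℂ³. -/
noncomputable def wedgeSq (u v : Fin 3 → ℂ) : ℝ :=
  (cdot u u * cdot v v - cdot u v * cdot v u).re

/-- `d_E(u,v) = ‖u ∧ v‖/(‖u‖‖v‖)`. -/
noncomputable def dE (u v : Fin 3 → ℂ) : ℝ :=
  Real.sqrt (wedgeSq u v) / (hnorm u * hnorm v)

/-- The signature (1,2) Hermitian form `⟨u,v⟩ = u₀ conj v₀ − u₁ conj v₁ − u₂ conj v₂`. -/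
noncomputable def hform (u v : Fin 3 → ℂ) : ℂ :=
  u 0 * conj (v 0) - u 1 * conj (v 1) - u 2 * conj (v 2)

/-- The visual distance `d(u,v) = sqrt(|⟨u,v⟩|/(‖u‖‖v‖))`. -/
noncomputable def vd (u v : Fin 3 → ℂ) : ℝ :=
  Real.sqrt (‖hform u v‖ / (hnorm u * hnorm v))

theorem norm_sub_sq_le_four_mul_sq_sub_norm_add_sq {E : Type*} [NormedAddCommGroup E]
    [InnerProductSpace ℝ E] {x y : E} (h : ‖y‖ ≤ ‖x‖) :
    ‖x - y‖ ^ 2 ≤ 4 * ‖x‖ ^ 2 - ‖x + y‖ ^ 2 := by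
  have := parallelogram_law_with_norm ℝ x y
  nlinarith [norm_nonneg y]

theorem four_mul_sq_sub_norm_add_sq_le {E : Type*} [SeminormedAddCommGroup E] [NormedSpace ℝ E]
    {x y : E} (h : ‖y‖ ≤ ‖x‖) :
    4 * ‖x‖ ^ 2 - ‖x + y‖ ^ 2 ≤ 4 * ‖x‖ * ‖x - y‖ := by
  have h_add : ‖x + y‖ ≤ 2 * ‖x‖ := by linarith [norm_add_le x y]
  have h_sub : 2 * ‖x‖ - ‖x + y‖ ≤ ‖x - y‖ := by
    have h2x : (x + y) + (x - y) = (2 : ℝ) • x := by rw [two_smul]; abel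
    have := norm_add_le (x + y) (x - y)
    rw [h2x, norm_smul, Real.norm_two] at this
    linarith
  nlinarith [norm_nonneg (x + y), norm_nonneg (x - y)]

theorem sq_norm_mul_add_mul_le {R : Type*} [SeminormedRing R] (a b c d : R) :
    ‖a * c + b * d‖ ^ 2 ≤ (‖a‖ ^ 2 + ‖b‖ ^ 2) * (‖c‖ ^ 2 + ‖d‖ ^ 2) := by
  have h : ‖a * c + b * d‖ ≤ ‖a‖ * ‖c‖ + ‖b‖ * ‖d‖ :=
    (norm_add_le _ _).trans (add_le_add (norm_mul_le _ _) (norm_mul_le _ _))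
  calc ‖a * c + b * d‖ ^ 2 ≤ (‖a‖ * ‖c‖ + ‖b‖ * ‖d‖) ^ 2 := by gcongr
    _ ≤ _ := by nlinarith [sq_nonneg (‖a‖ * ‖d‖ - ‖b‖ * ‖c‖)]

theorem cdot_self (u : Fin 3 → ℂ) :
    cdot u u = ((‖u 0‖ ^ 2 + ‖u 1‖ ^ 2 + ‖u 2‖ ^ 2 : ℝ) : ℂ) := by
  simp [cdot, Fin.sum_univ_three, Complex.mul_conj']

theorem cdot_comm (u v : Fin 3 → ℂ) : cdot v u = conj (cdot u v) := by
  simp [cdot, mul_comm]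

theorem sq_hnorm (u : Fin 3 → ℂ) : hnorm u ^ 2 = ‖u 0‖ ^ 2 + ‖u 1‖ ^ 2 + ‖u 2‖ ^ 2 := by
  rw [hnorm, cdot_self, Complex.ofReal_re, Real.sq_sqrt (by positivity)]

theorem wedgeSq_eq (u v : Fin 3 → ℂ) :
    wedgeSq u v = (hnorm u * hnorm v) ^ 2 - ‖cdot u v‖ ^ 2 := by
  rw [wedgeSq, cdot_comm u v, Complex.mul_conj', cdot_self, cdot_self, mul_pow, sq_hnorm, sq_hnorm]
  norm_cast

theorem hform_eq (u v : Fin 3 → ℂ) :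
    hform u v = u 0 * conj (v 0) - (u 1 * conj (v 1) + u 2 * conj (v 2)) := by
  rw [hform]; ring

theorem cdot_eq (u v : Fin 3 → ℂ) :
    cdot u v = u 0 * conj (v 0) + (u 1 * conj (v 1) + u 2 * conj (v 2)) := by
  rw [cdot, Fin.sum_univ_three]; ring

theorem sq_norm_one_add_sq_norm_two_of_hform_self {u : Fin 3 → ℂ} (hu : hform u u = 0) :
    ‖u 1‖ ^ 2 + ‖u 2‖ ^ 2 = ‖u 0‖ ^ 2 := by
  simp only [hform, Complex.mul_conj'] at hu
  norm_cast at hu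
  linarith

theorem apply_zero_ne_zero_of_hform_self {u : Fin 3 → ℂ} (hu : u ≠ 0) (hnull : hform u u = 0) :
    u 0 ≠ 0 := by
  intro h0
  have hsum := sq_norm_one_add_sq_norm_two_of_hform_self hnull
  rw [h0, norm_zero, zero_pow two_ne_zero] at hsum
  obtain ⟨h1, h2⟩ := (add_eq_zero_iff_of_nonneg (sq_nonneg _) (sq_nonneg _)).mp hsum
  refine hu (funext fun i => ?_)
  fin_cases i <;> simp_all

theorem hnorm_of_hform_self {u : Fin 3 → ℂ} (hu : hform u u = 0) : hnorm u = √2 * ‖u 0‖ := by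
  rw [hnorm, cdot_self, Complex.ofReal_re, add_assoc, sq_norm_one_add_sq_norm_two_of_hform_self hu,
    ← two_mul, Real.sqrt_mul zero_le_two, Real.sqrt_sq (norm_nonneg _)]

theorem norm_tail_le_norm_head {u v : Fin 3 → ℂ} (hu : hform u u = 0) (hv : hform v v = 0) :
    ‖u 1 * conj (v 1) + u 2 * conj (v 2)‖ ≤ ‖u 0 * conj (v 0)‖ := by
  have h := sq_norm_mul_add_mul_le (u 1) (u 2) (conj (v 1)) (conj (v 2))
  simp only [Complex.norm_conj, sq_norm_one_add_sq_norm_two_of_hform_self hu,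
    sq_norm_one_add_sq_norm_two_of_hform_self hv, ← mul_pow, ← norm_mul] at h
  rw [norm_mul, Complex.norm_conj, ← norm_mul]
  exact (pow_le_pow_iff_left₀ (norm_nonneg _) (norm_nonneg _) two_ne_zero).mp h

theorem sq_sqrt_div_le_and_le_sqrt_two_mul {a m w : ℝ} (ha : 0 < a) (hm : 0 ≤ m)
    (hmw : m ^ 2 ≤ w) (hw : w ≤ 4 * a * m) :
    √(m / (2 * a)) ^ 2 ≤ √w / (2 * a) ∧ √w / (2 * a) ≤ √2 * √(m / (2 * a)) := by
  have hw0 : 0 ≤ w := (sq_nonneg m).trans hmw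
  constructor
  · rw [Real.sq_sqrt (by positivity)]
    gcongr
    exact Real.le_sqrt_of_sq_le hmw
  · rw [← pow_le_pow_iff_left₀ (by positivity) (by positivity) two_ne_zero, div_pow, mul_pow √2,
      Real.sq_sqrt hw0, Real.sq_sqrt zero_le_two, Real.sq_sqrt (by positivity),
      div_le_iff₀ (by positivity)]
    calc w ≤ 4 * a * m := hw
      _ = 2 * (m / (2 * a)) * (2 * a) ^ 2 := by field_simp; ring

/-- On the sphere `S³ = {q = 0} ⊂ ℙ²ℂ`: `d(u,v)² ≤ d_E(u,v)` and
`d_E(u,v) ≤ C·d(u,v)` for an absolute constant `C`. -/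
theorem visual_vs_euclidean :
    ∃ C : ℝ, 0 < C ∧ ∀ u v : Fin 3 → ℂ, u ≠ 0 → v ≠ 0 →
      hform u u = 0 → hform v v = 0 →
      vd u v ^ 2 ≤ dE u v ∧ dE u v ≤ C * vd u v := by
  refine ⟨√2, by positivity, fun u v hu hv huu hvv => ?_⟩
  set A := u 0 * conj (v 0)
  set B := u 1 * conj (v 1) + u 2 * conj (v 2)
  have hBA : ‖B‖ ≤ ‖A‖ := norm_tail_le_norm_head huu hvv
  have hA : 0 < ‖A‖ := norm_pos_iff.mpr <| mul_ne_zero (apply_zero_ne_zero_of_hform_self hu huu)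
    ((map_ne_zero _).mpr (apply_zero_ne_zero_of_hform_self hv hvv))
  have hprod : hnorm u * hnorm v = 2 * ‖A‖ := by
    rw [hnorm_of_hform_self huu, hnorm_of_hform_self hvv, norm_mul, Complex.norm_conj]
    linear_combination (‖u 0‖ * ‖v 0‖) * Real.sq_sqrt (zero_le_two (α := ℝ))
  rw [vd, dE, hform_eq, wedgeSq_eq, cdot_eq, hprod, show (2 * ‖A‖) ^ 2 = 4 * ‖A‖ ^ 2 by ring]
  exact sq_sqrt_div_le_and_le_sqrt_two_mul hA (norm_nonneg _)
    (norm_sub_sq_le_four_mul_sq_sub_norm_add_sq hBA) (four_mul_sq_sub_norm_add_sq_le hBA)
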